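/- With α = 2/3, φ₀(x) = sin(2x/3) + (1/√3) cos(2x/3) and φ₁(x) = (1/4) sin(x/3) − (1/(4√3)) cos(x/3) + (1/20) sin(5x/3) + (1/(20√3)) cos(5x/3), the identity (α+1)² φ₁(x) + φ₁''(x) = −(α cos(x) φ₀(x) − sin(x) φ₀'(x)) holds for all real x, and φ₁'(−π) = φ₁'(π/2) = 0. -/

import Mathlib

open Real

noncomputable def vphi010 : ℝ → ℝ := fun x => Real.sin (2*x/3) + (1/Real.sqrt 3) * Real.cos (2*x/3)
noncomputable def vphi011 : ℝ → ℝ := fun x =>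
  (1/4) * Real.sin (x/3) - (1/(4*Real.sqrt 3)) * Real.cos (x/3)
    + (1/20) * Real.sin (5*x/3) + (1/(20*Real.sqrt 3)) * Real.cos (5*x/3)

/-!
`φ₀` is a single mode `a sin (k x) + b cos (k x)` of frequency `2/3` and `φ₁` a sum of modes of
frequencies `1/3` and `5/3`. For a mode `u` of frequency `k`, the angle-subtraction formulas give
`k cos x · u - sin x · u' = k · (the mode of frequency k - 1 with the same coefficients)`, so the
right-hand side is a mode of frequency `1/3`. Since `(α + 1)² = 25/9`, the frequency-`5/3` part of
`φ₁` solves the homogeneous equation, and the frequency-`1/3` part is multiplied by `25/9 - 1/9`.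
By sum-to-product, `φ₁' x = sin (π/3 - 2x/3) cos x / (3√3)`, which vanishes at `-π` and `π/2`.
-/

noncomputable def trigMode (k a b x : ℝ) : ℝ := a * sin (k * x) + b * cos (k * x)

theorem hasDerivAt_trigMode (k a b x : ℝ) :
    HasDerivAt (trigMode k a b) (trigMode k (-(k * b)) (k * a) x) x := by
  have hk : HasDerivAt (fun x => k * x) k x := by simpa using (hasDerivAt_id x).const_mul k
  exact ((hk.sin.const_mul a).add (hk.cos.const_mul b)).congr_deriv
    (by simp only [trigMode]; ring)

theorem deriv_trigMode (k a b : ℝ) : deriv (trigMode k a b) = trigMode k (-(k * b)) (k * a) :=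
  funext fun x => (hasDerivAt_trigMode k a b x).deriv

theorem deriv_trigMode_add (k a b l c d : ℝ) :
    deriv (trigMode k a b + trigMode l c d) =
      trigMode k (-(k * b)) (k * a) + trigMode l (-(l * d)) (l * c) :=
  funext fun x => ((hasDerivAt_trigMode k a b x).add (hasDerivAt_trigMode l c d x)).deriv

theorem mul_cos_mul_trigMode_sub_sin_mul_deriv (k a b x : ℝ) :
    k * cos x * trigMode k a b x - sin x * deriv (trigMode k a b) x =
      k * trigMode (k - 1) a b x := by
  rw [deriv_trigMode]
  simp only [trigMode]
  rw [sub_mul, one_mul, sin_sub, cos_sub]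
  ring

theorem vphi010_eq_trigMode : vphi010 = trigMode (2 / 3) 1 (1 / √3) := by
  funext x
  simp only [vphi010, trigMode]
  ring_nf

theorem vphi011_eq_trigMode_add :
    vphi011 = trigMode (1 / 3) (1 / 4) (-(1 / (4 * √3))) +
      trigMode (5 / 3) (1 / 20) (1 / (20 * √3)) := by
  funext x
  simp only [vphi011, trigMode, Pi.add_apply]
  ring_nf

theorem deriv_vphi011 (x : ℝ) :
    deriv vphi011 x = 1 / (3 * √3) * sin (π / 3 - 2 * x / 3) * cos x := by
  have hprod : 2 * sin (π / 3 - 2 * x / 3) * cos x =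
      sin (π / 3 - 5 / 3 * x) + sin (π / 3 + 1 / 3 * x) := by
    rw [two_mul_sin_mul_cos]
    ring_nf
  rw [vphi011_eq_trigMode_add, deriv_trigMode_add]
  simp only [trigMode, Pi.add_apply]
  rw [show 1 / (3 * √3) * sin (π / 3 - 2 * x / 3) * cos x =
      1 / (6 * √3) * (2 * sin (π / 3 - 2 * x / 3) * cos x) by ring,
    hprod, sin_sub (π / 3), sin_add (π / 3), sin_pi_div_three, cos_pi_div_three]
  have hsqrt3 : √3 ≠ 0 := by positivity
  field_simp
  ring

theorem vnotch_first_shadow_j1 :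
    (∀ x : ℝ, ((2/3 : ℝ) + 1)^2 * vphi011 x + deriv (deriv vphi011) x =
      -((2/3 : ℝ) * Real.cos x * vphi010 x - Real.sin x * deriv vphi010 x)) ∧
    deriv vphi011 (-π) = 0 ∧ deriv vphi011 (π/2) = 0 := by
  refine ⟨fun x => ?_, ?_, ?_⟩
  · rw [vphi010_eq_trigMode, mul_cos_mul_trigMode_sub_sin_mul_deriv, vphi011_eq_trigMode_add,
      deriv_trigMode_add, deriv_trigMode_add]
    simp only [trigMode, Pi.add_apply]
    rw [show (2 / 3 - 1 : ℝ) * x = -(1 / 3 * x) by ring, sin_neg, cos_neg]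
    ring
  · rw [deriv_vphi011, show π / 3 - 2 * -π / 3 = π by ring, sin_pi]
    ring
  · rw [deriv_vphi011, cos_pi_div_two]
    ring
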